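/- arXiv:2312.13920 — 4 statements merged into one kernel-verified Lean document; each statement's English description precedes it below -/
import Mathlib

section
/- Let X be a Polish topological vector space over 𝕂 (= ℝ or ℂ), let T be a continuous linear operator on X, and let a, b ∈ 𝕂. Assume that aT and bT each admit an invariant Borel probability measure different from δ₀. Then the operators aT and bT are orthogonal if and only if |a| ≠ |b|. More precisely: if |a| ≠ |b| then for any Borel probability measures m₁, m₂ with m₁ invariant under aT, m₂ invariant under bT, and m₁({0}) = 0 = m₂({0}), the measures m₁ and m₂ are mutually singular; and if |a| = |b|, then aT and bT share a common invariant Borel probability measure different from δ₀. -/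
/-!
If `‖a‖ < ‖b‖`, then `(aT)ⁿ = (a/b)ⁿ (bT)ⁿ` with `(a/b)ⁿ → 0`. Fix a small open neighbourhood `U`
of `0` (possible since `m₁ {0} = 0`) and `n` large. The set `s = (aT)⁻ⁿ Uᶜ` has small `m₁`-mass in
its complement, which is `(aT)⁻ⁿ U`, and small `m₂`-mass, because `s = (bT)⁻ⁿ {y | (a/b)ⁿ y ∉ U}`
and the points `(a/b)ⁿ y` converge to `0`. Letting the errors be `2⁻ᵏ` and applying Borel–Cantelli
to both measures separates `m₁` from `m₂`.

If `‖a‖ = ‖b‖`, then `bT = δ • aT` with `‖δ‖ = 1`. Averaging an `aT`-invariant measure `m` over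
the rotations `x ↦ g • x`, `g` in the unit sphere of `𝕂` with its Haar measure, produces a measure
invariant under `aT` (which commutes with rotations) and under every rotation, hence under `bT`;
the averaging does not change the mass of `{0}`. Conditioning it on `{0}ᶜ` yields an invariant
measure of both operators which is not singular with respect to itself.
-/

open MeasureTheory Filter Topology ProbabilityTheory Metric
open scoped ENNReal

namespace MeasureTheory

variable {α : Type*} [MeasurableSpace α] {μ ν : Measure α}

theorem Measure.MutuallySingular.of_forall_exists_measure_le
    (h : ∀ ε : ℝ≥0∞, 0 < ε → ∃ s : Set α, μ sᶜ ≤ ε ∧ ν s ≤ ε) : μ ⟂ₘ ν := by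
  choose s hμs hνs using fun k : ℕ => h (2⁻¹ ^ k) (ENNReal.pow_pos (by norm_num) k)
  have hsum : ∑' k : ℕ, (2⁻¹ : ℝ≥0∞) ^ k ≠ ∞ := by simp [ENNReal.tsum_geometric]
  refine .mk (s := limsup (fun k => (s k)ᶜ) atTop) (t := limsup s atTop)
    (measure_limsup_atTop_eq_zero (ne_top_of_le_ne_top hsum (ENNReal.tsum_le_tsum hμs)))
    (measure_limsup_atTop_eq_zero (ne_top_of_le_ne_top hsum (ENNReal.tsum_le_tsum hνs))) ?_
  intro x _
  simp only [Set.mem_union, mem_limsup_iff_frequently_mem]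
  rw [← frequently_or_distrib]
  exact Frequently.of_forall fun k => (em _).symm

theorem measurePreserving_of_measure_preimage_eq {β : Type*} [MeasurableSpace β] {μb : Measure β}
    {f : α → β} (hf : Measurable f) (h : ∀ s, MeasurableSet s → μ (f ⁻¹' s) = μb s) :
    MeasurePreserving f μ μb :=
  ⟨hf, Measure.ext fun s hs => by rw [Measure.map_apply hf hs, h s hs]⟩

theorem MeasurePreserving.cond {f : α → α} (hf : MeasurePreserving f μ μ) {s : Set α}
    (hs : MeasurableSet s) (hfs : f ⁻¹' s =ᵐ[μ] s) : MeasurePreserving f μ[|s] μ[|s] := by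
  have := (hf.restrict_preimage hs).smul_measure (μ s)⁻¹
  rwa [Measure.restrict_congr_set hfs] at this

theorem MeasurePreserving.cond_compl_singleton [IsFiniteMeasure μ] [MeasurableSingletonClass α]
    {f : α → α} (hf : MeasurePreserving f μ μ) {x : α} (hx : f x = x) :
    MeasurePreserving f μ[|{x}ᶜ] μ[|{x}ᶜ] :=
  hf.cond (measurableSet_singleton x).compl <| ae_eq_of_subset_of_measure_ge
    (fun y hy hyx => hy (by rw [Set.mem_singleton_iff.1 hyx, hx]; rfl))
    (hf.measure_preimage (measurableSet_singleton x).compl.nullMeasurableSet).ge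
    (hf.measurable (measurableSet_singleton x).compl).nullMeasurableSet (measure_ne_top μ _)

theorem eq_dirac_of_measure_compl_singleton [IsProbabilityMeasure μ] [MeasurableSingletonClass α]
    {x : α} (h : μ {x}ᶜ = 0) : μ = Measure.dirac x := by
  rw [← Measure.restrict_eq_self_of_ae_mem (s := {x})
      ((measure_eq_zero_iff_ae_notMem.1 h).mono fun _ => not_not.1),
    Measure.restrict_singleton, (prob_compl_eq_zero_iff (measurableSet_singleton x)).1 h, one_smul]

end MeasureTheory

theorem iterate_const_smul_comp {M X : Type*} [Monoid M] [MulAction M X] {c : M} {S : X → X}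
    (hS : ∀ x, S (c • x) = c • S x) (n : ℕ) :
    (fun x => c • S x)^[n] = (c ^ n • ·) ∘ S^[n] := by
  rw [show (fun x => c • S x) = (c • ·) ∘ S from rfl,
    Function.Commute.comp_iterate (fun x => (hS x).symm), smul_iterate]

theorem exists_sphere_mul_eq_of_norm_eq {𝕜 : Type*} [NormedDivisionRing 𝕜] {a b : 𝕜}
    (h : ‖a‖ = ‖b‖) : ∃ δ : sphere (0 : 𝕜) 1, (δ : 𝕜) * a = b := by
  by_cases ha : a = 0
  · refine ⟨1, ?_⟩
    rw [ha, norm_zero, eq_comm, norm_eq_zero] at h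
    rw [ha, h, mul_zero]
  · refine ⟨⟨b / a, ?_⟩, div_mul_cancel₀ b ha⟩
    rw [mem_sphere_zero_iff_norm, norm_div, ← h, div_self (norm_ne_zero_iff.2 ha)]

section Contraction

variable {𝕂 : Type*} [NormedField 𝕂] {X : Type*} [AddCommMonoid X] [Module 𝕂 X]
  [TopologicalSpace X] [ContinuousSMul 𝕂 X] [MeasurableSpace X] [BorelSpace X]

theorem tendsto_measure_preimage_pow_smul_compl (ν : Measure X) [IsFiniteMeasure ν] {c : 𝕂}
    (hc : ‖c‖ < 1) {U : Set X} (hU : U ∈ 𝓝 0) (hUm : MeasurableSet U) :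
    Tendsto (fun n : ℕ => ν ((c ^ n • ·) ⁻¹' Uᶜ)) atTop (𝓝 0) := by
  have hlim : ∀ x : X, Tendsto (fun n : ℕ => c ^ n • x) atTop (𝓝 0) := fun x => by
    simpa using (tendsto_pow_atTop_nhds_zero_of_norm_lt_one hc).smul_const x
  simpa using tendsto_measure_of_tendsto_indicator_of_isFiniteMeasure (A := ∅) atTop ν
    (fun n => (continuous_const_smul (c ^ n)).measurable hUm.compl)
    fun x => (hlim x |>.eventually_mem hU).mono fun n hn => by simpa using hn

theorem mutuallySingular_of_norm_lt_norm [TopologicalSpace.PseudoMetrizableSpace X]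
    {μ ν : Measure X} [IsFiniteMeasure μ] [IsFiniteMeasure ν] {S : X → X} {a b : 𝕂}
    (hab : ‖a‖ < ‖b‖) (hS : ∀ (c : 𝕂) x, S (c • x) = c • S x)
    (hμ : MeasurePreserving (fun x => a • S x) μ μ)
    (hν : MeasurePreserving (fun x => b • S x) ν ν) (hμ0 : μ {0} = 0) : μ ⟂ₘ ν := by
  have hb : b ≠ 0 := norm_pos_iff.1 ((norm_nonneg a).trans_lt hab)
  set c := a / b
  have hc : ‖c‖ < 1 := by rwa [norm_div, div_lt_one (norm_pos_iff.2 hb)]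
  refine Measure.MutuallySingular.of_forall_exists_measure_le fun ε hε => ?_
  obtain ⟨U, hU0, hUo, hμU⟩ := Set.exists_isOpen_lt_of_lt {0} ε (hμ0.trans_lt hε)
  obtain ⟨n, hn⟩ := ((tendsto_measure_preimage_pow_smul_compl ν hc
    (hUo.mem_nhds (hU0 rfl)) hUo.measurableSet).eventually_le_const hε).exists
  have hiter : (fun x => a • S x)^[n] = (c ^ n • ·) ∘ (fun x => b • S x)^[n] := by
    ext x
    simp only [iterate_const_smul_comp (hS a), iterate_const_smul_comp (hS b),
      Function.comp_apply, smul_smul, ← mul_pow, c, div_mul_cancel₀ a hb]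
  refine ⟨(fun x => a • S x)^[n] ⁻¹' Uᶜ, ?_, ?_⟩
  · rw [← Set.preimage_compl, compl_compl,
      (hμ.iterate n).measure_preimage hUo.measurableSet.nullMeasurableSet]
    exact hμU.le
  · rw [hiter, Set.preimage_comp, (hν.iterate n).measure_preimage
      ((continuous_const_smul _).measurable hUo.measurableSet.compl).nullMeasurableSet]
    exact hn

end Contraction

section SphereAverage

variable {𝕂 : Type*} [RCLike 𝕂]

noncomputable def sphereHaar : Measure (sphere (0 : 𝕂) 1) := Measure.haarMeasure ⊤

instance : IsProbabilityMeasure (sphereHaar (𝕂 := 𝕂)) :=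
  ⟨Measure.haarMeasure_self (K₀ := ⊤)⟩

instance : (sphereHaar (𝕂 := 𝕂)).IsMulLeftInvariant :=
  Measure.isMulLeftInvariant_haarMeasure ⊤

variable {X : Type*} [AddCommMonoid X] [Module 𝕂 X] [TopologicalSpace X] [ContinuousSMul 𝕂 X]
  [MeasurableSpace X] [BorelSpace X]

variable (𝕂) in
noncomputable def sphereAverage (m : Measure X) : Measure X :=
  (sphereHaar.prod m).map fun p : sphere (0 : 𝕂) 1 × X => (p.1 : 𝕂) • p.2

variable (m : Measure X)

theorem measurable_sphere_smul : Measurable fun p : sphere (0 : 𝕂) 1 × X => (p.1 : 𝕂) • p.2 :=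
  (continuous_subtype_val.comp continuous_fst).smul continuous_snd |>.measurable

instance [IsProbabilityMeasure m] : IsProbabilityMeasure (sphereAverage 𝕂 m) :=
  Measure.isProbabilityMeasure_map measurable_sphere_smul.aemeasurable

theorem MeasureTheory.MeasurePreserving.sphereAverage [SFinite m] {S : X → X}
    (hS : MeasurePreserving S m m) (hSsmul : ∀ (c : 𝕂) x, S (c • x) = c • S x) :
    MeasurePreserving S (sphereAverage 𝕂 m) (sphereAverage 𝕂 m) :=
  (measurable_sphere_smul.measurePreserving _).of_semiconj
    ((MeasurePreserving.id sphereHaar).prod hS) (fun p => (hSsmul p.1 p.2).symm) hS.measurable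

theorem measurePreserving_smul_sphereAverage [SFinite m] (δ : sphere (0 : 𝕂) 1) :
    MeasurePreserving ((δ : 𝕂) • · : X → X) (sphereAverage 𝕂 m) (sphereAverage 𝕂 m) :=
  (measurable_sphere_smul.measurePreserving _).of_semiconj
    ((measurePreserving_mul_left sphereHaar δ).prod (MeasurePreserving.id m))
    (fun p => by simp [smul_smul]) (continuous_const_smul _).measurable

theorem measurePreserving_sphereAverage_of_norm_eq [SFinite m] {S : X → X}
    {a b : 𝕂} (hS : MeasurePreserving (fun x => a • S x) m m)
    (hSsmul : ∀ (c : 𝕂) x, S (c • x) = c • S x) (hab : ‖a‖ = ‖b‖) :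
    MeasurePreserving (fun x => b • S x) (sphereAverage 𝕂 m) (sphereAverage 𝕂 m) := by
  obtain ⟨δ, rfl⟩ := exists_sphere_mul_eq_of_norm_eq hab
  have := (measurePreserving_smul_sphereAverage m δ).comp
    (hS.sphereAverage m fun c x => by rw [hSsmul, smul_comm])
  simpa only [Function.comp_def, smul_smul] using this

theorem sphereAverage_compl_zero [T1Space X] [SFinite m] :
    sphereAverage 𝕂 m {0}ᶜ = m {0}ᶜ := by
  have : (fun p : sphere (0 : 𝕂) 1 × X => (p.1 : 𝕂) • p.2) ⁻¹' {0}ᶜ = Set.univ ×ˢ {0}ᶜ := by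
    ext ⟨g, x⟩
    simp [ne_zero_of_mem_unit_sphere g]
  rw [sphereAverage, Measure.map_apply measurable_sphere_smul (measurableSet_singleton 0).compl,
    this, Measure.prod_prod, measure_univ, one_mul]

theorem exists_measurePreserving_smul_of_norm_eq [T1Space X] [IsProbabilityMeasure m]
    {S : X → X} {a b : 𝕂} (hS : MeasurePreserving (fun x => a • S x) m m)
    (hSsmul : ∀ (c : 𝕂) x, S (c • x) = c • S x) (hab : ‖a‖ = ‖b‖) (hm : m {0}ᶜ ≠ 0) :
    ∃ μ : Measure X, IsProbabilityMeasure μ ∧ μ {0} = 0 ∧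
      MeasurePreserving (fun x => a • S x) μ μ ∧ MeasurePreserving (fun x => b • S x) μ μ := by
  have hS0 (c : 𝕂) : c • S 0 = 0 := by
    rw [show S 0 = 0 by simpa using hSsmul 0 0, smul_zero]
  have hμ : sphereAverage 𝕂 m {0}ᶜ ≠ 0 := by rwa [sphereAverage_compl_zero]
  refine ⟨(sphereAverage 𝕂 m)[|{0}ᶜ], cond_isProbabilityMeasure hμ,
    by simp [cond_apply (measurableSet_singleton (0 : X)).compl], ?_, ?_⟩
  · exact (hS.sphereAverage m fun c x => by rw [hSsmul, smul_comm]).cond_compl_singleton (hS0 a)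
  · exact (measurePreserving_sphereAverage_of_norm_eq m hS hSsmul hab).cond_compl_singleton
      (hS0 b)

end SphereAverage

theorem scalar_multiples_orthogonal_iff_general
    {𝕂 : Type*} [RCLike 𝕂] {X : Type*} [AddCommGroup X] [Module 𝕂 X]
    [TopologicalSpace X] [ContinuousSMul 𝕂 X]
    [PolishSpace X] [MeasurableSpace X] [BorelSpace X]
    (T : X → X) (hTlin : IsLinearMap 𝕂 T) (hTcont : Continuous T) (a b : 𝕂)
    (ha : ∃ m : Measure X, IsProbabilityMeasure m ∧
        (∀ A : Set X, MeasurableSet A → m ((fun x => a • T x) ⁻¹' A) = m A) ∧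
        m ≠ Measure.dirac 0) :
    ((∀ m₁ m₂ : Measure X, IsProbabilityMeasure m₁ → IsProbabilityMeasure m₂ →
        (∀ A : Set X, MeasurableSet A → m₁ ((fun x => a • T x) ⁻¹' A) = m₁ A) →
        (∀ A : Set X, MeasurableSet A → m₂ ((fun x => b • T x) ⁻¹' A) = m₂ A) →
        m₁ {0} = 0 → m₂ {0} = 0 → m₁.MutuallySingular m₂) ↔ ‖a‖ ≠ ‖b‖) ∧
    (‖a‖ = ‖b‖ → ∃ m : Measure X, IsProbabilityMeasure m ∧
        (∀ A : Set X, MeasurableSet A → m ((fun x => a • T x) ⁻¹' A) = m A) ∧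
        (∀ A : Set X, MeasurableSet A → m ((fun x => b • T x) ⁻¹' A) = m A) ∧
        m ≠ Measure.dirac 0) := by
  have preserving {c : 𝕂} {μ : Measure X}
      (h : ∀ A : Set X, MeasurableSet A → μ ((fun x => c • T x) ⁻¹' A) = μ A) :
      MeasurePreserving (fun x => c • T x) μ μ :=
    measurePreserving_of_measure_preimage_eq (hTcont.const_smul c).measurable h
  have invariant {c : 𝕂} {μ : Measure X} (h : MeasurePreserving (fun x => c • T x) μ μ) :
      ∀ A : Set X, MeasurableSet A → μ ((fun x => c • T x) ⁻¹' A) = μ A :=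
    fun A hA => h.measure_preimage hA.nullMeasurableSet
  obtain ⟨m, _, hm, hm_ne⟩ := ha
  have common (hab : ‖a‖ = ‖b‖) := exists_measurePreserving_smul_of_norm_eq m (preserving hm)
    hTlin.map_smul hab (mt eq_dirac_of_measure_compl_singleton hm_ne)
  refine ⟨⟨fun horth hab => ?_, fun hab m₁ m₂ _ _ h₁ h₂ h₁0 h₂0 => ?_⟩, fun hab => ?_⟩
  · obtain ⟨μ, hμ, hμ0, hμa, hμb⟩ := common hab
    exact IsProbabilityMeasure.ne_zero μ <| (Measure.MutuallySingular.self_iff μ).1 <|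
      horth μ μ hμ hμ (invariant hμa) (invariant hμb) hμ0 hμ0
  · rcases hab.lt_or_gt with h | h
    · exact mutuallySingular_of_norm_lt_norm h hTlin.map_smul (preserving h₁) (preserving h₂) h₁0
    · exact (mutuallySingular_of_norm_lt_norm h hTlin.map_smul (preserving h₂) (preserving h₁)
        h₂0).symm
  · obtain ⟨μ, hμ, hμ0, hμa, hμb⟩ := common hab
    exact ⟨μ, hμ, invariant hμa, invariant hμb, fun h => by simp [h] at hμ0⟩

/-- Let `T` be a continuous linear operator on a Polish topological vector
space `X` over `𝕂 = ℝ` or `ℂ`, and let `a, b ∈ 𝕂`. Assume `aT` and `bT` each admit a non-trivial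
invariant Borel probability measure. Then `aT` and `bT` are orthogonal iff `|a| ≠ |b|`; more
precisely, if `|a| ≠ |b|` then any invariant probability measures for `aT`, `bT` not charging
`{0}` are mutually singular, and if `|a| = |b|` then `aT` and `bT` share a common invariant
probability measure different from `δ₀`. -/
theorem scalar_multiples_orthogonal_iff
    {𝕂 : Type*} [RCLike 𝕂] {X : Type*} [AddCommGroup X] [Module 𝕂 X]
    [TopologicalSpace X] [IsTopologicalAddGroup X] [ContinuousSMul 𝕂 X]
    [PolishSpace X] [MeasurableSpace X] [BorelSpace X]
    (T : X → X) (hTlin : IsLinearMap 𝕂 T) (hTcont : Continuous T) (a b : 𝕂)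
    (ha : ∃ m : Measure X, IsProbabilityMeasure m ∧
        (∀ A : Set X, MeasurableSet A → m ((fun x => a • T x) ⁻¹' A) = m A) ∧
        m ≠ Measure.dirac 0)
    (hb : ∃ m : Measure X, IsProbabilityMeasure m ∧
        (∀ A : Set X, MeasurableSet A → m ((fun x => b • T x) ⁻¹' A) = m A) ∧
        m ≠ Measure.dirac 0) :
    ((∀ m₁ m₂ : Measure X, IsProbabilityMeasure m₁ → IsProbabilityMeasure m₂ →
        (∀ A : Set X, MeasurableSet A → m₁ ((fun x => a • T x) ⁻¹' A) = m₁ A) →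
        (∀ A : Set X, MeasurableSet A → m₂ ((fun x => b • T x) ⁻¹' A) = m₂ A) →
        m₁ {0} = 0 → m₂ {0} = 0 → m₁.MutuallySingular m₂) ↔ ‖a‖ ≠ ‖b‖) ∧
    (‖a‖ = ‖b‖ → ∃ m : Measure X, IsProbabilityMeasure m ∧
        (∀ A : Set X, MeasurableSet A → m ((fun x => a • T x) ⁻¹' A) = m A) ∧
        (∀ A : Set X, MeasurableSet A → m ((fun x => b • T x) ⁻¹' A) = m A) ∧
        m ≠ Measure.dirac 0) :=
  scalar_multiples_orthogonal_iff_general T hTlin hTcont a b ha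
end

section
/- Let 1 ≤ p < ∞ and let B_u, B_v be the weighted backward shifts on X = ℓ_p(ℤ₊) associated with weight sequences u and v. Assume that either (A) for every N ≥ 0, liminf_{n→∞} max_{0≤d≤N} |u₁⋯u_{n+d} / (v₁⋯v_{n+d})| = 0, or (B) for every N ≥ 0, limsup_{n→∞} min_{0≤d≤N} |u₁⋯u_{n+d} / (v₁⋯v_{n+d})| = ∞. Then B_u and B_v are orthogonal: for any Borel probability measures m_u, m_v on X with m_u B_u-invariant, m_v B_v-invariant and m_u({0}) = 0 = m_v({0}), the measures m_u and m_v are mutually singular. -/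
/-!
Write `P_w(m) = w₁⋯w_m`, so that `P_w(d) · (B_wⁿ x)_d = P_w(n+d) · x_{n+d}`. If `‖B_vⁿ x‖ ≤ C`,
then for `d ≤ N` this gives `|P_u(n+d) x_{n+d}| ≤ |P_u(n+d)/P_v(n+d)| · |P_v(d)| · C`, which
under (A) is `< 1/(N+1)` for a suitable `n`: so `x` lies in `B_u⁻ⁿ(V_N)`, where
`V_N = {y : |P_u(d) y_d| < 1/(N+1) for d ≤ N}`. The sets `V_N` shrink to `{0}`, hence
`m_u(V_N) → 0`, and by invariance `m_u(B_u⁻ⁿ V_N) = m_u(V_N)` is small, while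
`m_v(‖B_vⁿ x‖ > C) = m_v(‖x‖ > C)` is small for large `C`. A Borel–Cantelli argument then
separates `m_u` from `m_v`; case (B) is case (A) with `u` and `v` exchanged.
-/

open MeasureTheory Filter Finset
open scoped ENNReal NNReal Topology

noncomputable instance {𝕂 : Type*} [RCLike 𝕂] {p : ℝ≥0∞} [Fact (1 ≤ p)] :
    MeasurableSpace (lp (fun _ : ℕ => 𝕂) p) := borel _

instance {𝕂 : Type*} [RCLike 𝕂] {p : ℝ≥0∞} [Fact (1 ≤ p)] :
    BorelSpace (lp (fun _ : ℕ => 𝕂) p) := ⟨rfl⟩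

theorem MeasureTheory.Measure.mutuallySingular_of_forall_exists_measure_lt {α : Type*}
    [MeasurableSpace α] {μ ν : Measure α}
    (h : ∀ ε : ℝ≥0∞, 0 < ε → ∃ s, MeasurableSet s ∧ μ s < ε ∧ ν sᶜ < ε) : μ ⟂ₘ ν := by
  choose s hs hμs hνs using fun k : ℕ => h (2⁻¹ ^ k) (ENNReal.pow_pos (by norm_num) k)
  have hsum : ∑' k : ℕ, (2⁻¹ : ℝ≥0∞) ^ k ≠ ∞ := by
    simp [ENNReal.tsum_geometric, ENNReal.one_sub_inv_two]
  refine ⟨limsup s atTop, .measurableSet_limsup hs, measure_limsup_atTop_eq_zero <|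
    ne_top_of_le_ne_top hsum (ENNReal.tsum_le_tsum fun k => (hμs k).le), ?_⟩
  refine measure_mono_null ?_ (measure_limsup_atTop_eq_zero (s := fun k => (s k)ᶜ) <|
    ne_top_of_le_ne_top hsum (ENNReal.tsum_le_tsum fun k => (hνs k).le))
  rw [limsup_compl]
  exact liminf_le_limsup

theorem MeasureTheory.MeasurePreserving.of_measure_preimage {α β : Type*} [MeasurableSpace α]
    [MeasurableSpace β] {μ : Measure α} {ν : Measure β} {f : α → β} (hf : Measurable f)
    (h : ∀ s, MeasurableSet s → μ (f ⁻¹' s) = ν s) : MeasurePreserving f μ ν :=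
  ⟨hf, Measure.ext fun s hs => by rw [Measure.map_apply hf hs, h s hs]⟩

theorem tendsto_measure_norm_gt_atTop {E : Type*} [NormedAddCommGroup E] [MeasurableSpace E]
    [OpensMeasurableSpace E] (μ : Measure E) [IsFiniteMeasure μ] :
    Tendsto (fun C : ℝ => μ {x | C < ‖x‖}) atTop (𝓝 0) := by
  have h := tendsto_measure_iInter_atTop (μ := μ)
    (fun C : ℝ => (measurableSet_lt measurable_const measurable_norm).nullMeasurableSet)
    (fun a b hab x hx => hab.trans_lt hx) ⟨0, measure_ne_top μ _⟩
  rwa [Set.iInter_eq_empty_iff.mpr fun x => ⟨‖x‖, lt_irrefl ‖x‖⟩, measure_empty] at h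

def weightProd {M : Type*} [CommMonoid M] (w : ℕ → M) (m : ℕ) : M := ∏ i ∈ Icc 1 m, w i

theorem weightProd_succ {M : Type*} [CommMonoid M] (w : ℕ → M) (m : ℕ) :
    weightProd w (m + 1) = weightProd w m * w (m + 1) :=
  prod_Icc_succ_top (by omega) w

theorem weightProd_ne_zero {M : Type*} [CommMonoidWithZero M] [NoZeroDivisors M] [Nontrivial M]
    {w : ℕ → M} (hw : ∀ n, 1 ≤ n → w n ≠ 0) (m : ℕ) : weightProd w m ≠ 0 :=
  prod_ne_zero_iff.mpr fun i hi => hw i (mem_Icc.mp hi).1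

section WeightedShift

variable {𝕂 : Type*} [NormedField 𝕂] {p : ℝ≥0∞}

local notation "ℓᵖ" => lp (fun _ : ℕ => 𝕂) p

def IsBackwardShift (w : ℕ → 𝕂) (B : ℓᵖ → ℓᵖ) : Prop :=
  ∀ x n, (B x : ℕ → 𝕂) n = w (n + 1) * (x : ℕ → 𝕂) (n + 1)

theorem IsBackwardShift.weightProd_mul_iterate_apply {w : ℕ → 𝕂} {B : ℓᵖ → ℓᵖ}
    (hB : IsBackwardShift w B) (n : ℕ) (x : ℓᵖ) (d : ℕ) :
    weightProd w d * (B^[n] x : ℕ → 𝕂) d = weightProd w (n + d) * (x : ℕ → 𝕂) (n + d) := by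
  induction n generalizing x with
  | zero => simp
  | succ n ih =>
    rw [Function.iterate_succ_apply, ih, hB, ← mul_assoc, ← weightProd_succ,
      Nat.add_right_comm n 1 d]

def smallHead (c : ℕ → 𝕂) (N : ℕ) : Set ℓᵖ :=
  {y | ∀ d ≤ N, ‖c d * (y : ℕ → 𝕂) d‖ < 1 / ((N : ℝ) + 1)}

theorem antitone_smallHead (c : ℕ → 𝕂) : Antitone (smallHead (p := p) c) := by
  intro a b hab y hy d hd
  exact (hy d (hd.trans hab)).trans_le (Nat.one_div_le_one_div hab)

theorem iInter_smallHead_subset {c : ℕ → 𝕂} (hc : ∀ d, c d ≠ 0) :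
    ⋂ N, smallHead (p := p) c N ⊆ {0} := by
  intro y hy
  refine lp.ext (funext fun d => by_contra fun hyd => ?_)
  obtain ⟨N, hN⟩ := exists_nat_one_div_lt (norm_pos_iff.mpr (mul_ne_zero (hc d) hyd))
  have := Set.mem_iInter.mp hy (max N d) d (le_max_right N d)
  exact (this.trans_le (Nat.one_div_le_one_div (le_max_left N d))).not_gt hN

theorem IsBackwardShift.subset_preimage_iterate_smallHead [Fact (1 ≤ p)] {u v : ℕ → 𝕂}
    (hv0 : ∀ n, 1 ≤ n → v n ≠ 0) {Bu Bv : ℓᵖ → ℓᵖ} (hBu : IsBackwardShift u Bu)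
    (hBv : IsBackwardShift v Bv) {n N : ℕ} {C : ℝ}
    (h : ∀ d ≤ N, ‖weightProd u (n + d)‖ / ‖weightProd v (n + d)‖ * (‖weightProd v d‖ * C)
      < 1 / ((N : ℝ) + 1)) :
    {x | ‖Bv^[n] x‖ ≤ C} ⊆ Bu^[n] ⁻¹' smallHead (weightProd u) N := by
  intro x hx d hd
  have hv : ‖weightProd v (n + d)‖ ≠ 0 := norm_ne_zero_iff.mpr (weightProd_ne_zero hv0 _)
  calc ‖weightProd u d * (Bu^[n] x : ℕ → 𝕂) d‖
      = ‖weightProd u (n + d)‖ / ‖weightProd v (n + d)‖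
          * ‖weightProd v d * (Bv^[n] x : ℕ → 𝕂) d‖ := by
        rw [hBu.weightProd_mul_iterate_apply, hBv.weightProd_mul_iterate_apply, norm_mul,
          norm_mul]
        field_simp
    _ ≤ ‖weightProd u (n + d)‖ / ‖weightProd v (n + d)‖ * (‖weightProd v d‖ * C) := by
        rw [norm_mul]
        gcongr
        exact (lp.norm_apply_le_norm (zero_lt_one.trans_le Fact.out).ne' _ d).trans hx
    _ < 1 / ((N : ℝ) + 1) := h d hd

end WeightedShift

section Measure

variable {𝕂 : Type*} [RCLike 𝕂] {p : ℝ≥0∞} [Fact (1 ≤ p)]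

local notation "ℓᵖ" => lp (fun _ : ℕ => 𝕂) p

theorem measurableSet_smallHead (c : ℕ → 𝕂) (N : ℕ) : MeasurableSet (smallHead (p := p) c N) := by
  have hcoord (d : ℕ) : Measurable fun y : ℓᵖ => (y : ℕ → 𝕂) d :=
    (lp.evalCLM 𝕂 (fun _ : ℕ => 𝕂) p d).continuous.measurable
  simp only [smallHead, Set.ofPred_forall]
  exact .biInter (Set.to_countable _) fun d _ =>
    measurableSet_lt (measurable_const.mul (hcoord d)).norm measurable_const

theorem tendsto_measure_smallHead {c : ℕ → 𝕂} (hc : ∀ d, c d ≠ 0) (μ : Measure ℓᵖ)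
    [IsFiniteMeasure μ] (hμ : μ {0} = 0) :
    Tendsto (fun N => μ (smallHead c N)) atTop (𝓝 0) := by
  have h := tendsto_measure_iInter_atTop (μ := μ)
    (fun N => (measurableSet_smallHead c N).nullMeasurableSet) (antitone_smallHead c)
    ⟨0, measure_ne_top μ _⟩
  rwa [measure_mono_null (iInter_smallHead_subset hc) hμ] at h

theorem exists_measurableSet_measure_lt_measure_compl_lt {u v : ℕ → 𝕂}
    (hu0 : ∀ n, 1 ≤ n → u n ≠ 0) (hv0 : ∀ n, 1 ≤ n → v n ≠ 0) {Bu Bv : ℓᵖ → ℓᵖ}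
    (hBu : IsBackwardShift u Bu) (hBv : IsBackwardShift v Bv)
    (hratio : ∀ N : ℕ, ∀ ε : ℝ, 0 < ε → ∃ n, ∀ d ≤ N,
      ‖weightProd u (n + d)‖ / ‖weightProd v (n + d)‖ < ε)
    {μ ν : Measure ℓᵖ} [IsFiniteMeasure μ] [IsFiniteMeasure ν] (hμ : MeasurePreserving Bu μ μ)
    (hν : MeasurePreserving Bv ν ν) (hμ0 : μ {0} = 0) {ε : ℝ≥0∞} (hε : 0 < ε) :
    ∃ s, MeasurableSet s ∧ μ s < ε ∧ ν sᶜ < ε := by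
  obtain ⟨N, hN⟩ :=
    ((tendsto_measure_smallHead (weightProd_ne_zero hu0) μ hμ0).eventually (gt_mem_nhds hε)).exists
  obtain ⟨C, hC, hC0⟩ :=
    (((tendsto_measure_norm_gt_atTop ν).eventually (gt_mem_nhds hε)).and
      (eventually_ge_atTop 0)).exists
  set M : ℝ := (∑ j ∈ range (N + 1), ‖weightProd v j‖) * C + 1
  have hM : 0 < M := by positivity
  obtain ⟨n, hn⟩ := hratio N (1 / ((N : ℝ) + 1) / M) (by positivity)
  have hsub : {x | ‖Bv^[n] x‖ ≤ C} ⊆ Bu^[n] ⁻¹' smallHead (weightProd u) N := by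
    refine hBu.subset_preimage_iterate_smallHead hv0 hBv fun d hd => ?_
    have hPd : ‖weightProd v d‖ * C ≤ M := by
      have := single_le_sum (fun j _ => norm_nonneg (weightProd v j))
        (mem_range.mpr (Nat.lt_succ_of_le hd))
      nlinarith
    calc ‖weightProd u (n + d)‖ / ‖weightProd v (n + d)‖ * (‖weightProd v d‖ * C)
        ≤ ‖weightProd u (n + d)‖ / ‖weightProd v (n + d)‖ * M := by gcongr
      _ < 1 / ((N : ℝ) + 1) / M * M := mul_lt_mul_of_pos_right (hn d hd) hM
      _ = 1 / ((N : ℝ) + 1) := div_mul_cancel₀ _ hM.ne'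
  refine ⟨Bu^[n] ⁻¹' smallHead (weightProd u) N,
    (hμ.iterate n).measurable (measurableSet_smallHead _ N), ?_, ?_⟩
  · rwa [(hμ.iterate n).measure_preimage (measurableSet_smallHead _ N).nullMeasurableSet]
  · calc ν (Bu^[n] ⁻¹' smallHead (weightProd u) N)ᶜ ≤ ν (Bv^[n] ⁻¹' {y | C < ‖y‖}) :=
          measure_mono fun x hx => (not_le.mp fun hle => hx (hsub hle) : C < ‖Bv^[n] x‖)
      _ = ν {y | C < ‖y‖} := (hν.iterate n).measure_preimage
          (measurableSet_lt measurable_const measurable_norm).nullMeasurableSet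
      _ < ε := hC

end Measure

theorem orthogonal_of_blocks_general
    {𝕂 : Type*} [RCLike 𝕂] (p : ℝ≥0∞) [Fact (1 ≤ p)]
    (u v : ℕ → 𝕂) (hu0 : ∀ n, 1 ≤ n → u n ≠ 0) (hv0 : ∀ n, 1 ≤ n → v n ≠ 0)
    (Bu Bv : lp (fun _ : ℕ => 𝕂) p →L[𝕂] lp (fun _ : ℕ => 𝕂) p)
    (hBu : ∀ (x : lp (fun _ : ℕ => 𝕂) p) (n : ℕ),
        (Bu x : ∀ _ : ℕ, 𝕂) n = u (n + 1) * (x : ∀ _ : ℕ, 𝕂) (n + 1))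
    (hBv : ∀ (x : lp (fun _ : ℕ => 𝕂) p) (n : ℕ),
        (Bv x : ∀ _ : ℕ, 𝕂) n = v (n + 1) * (x : ∀ _ : ℕ, 𝕂) (n + 1))
    (hratio :
      (∀ N : ℕ, ∀ ε : ℝ, 0 < ε → ∃ᶠ n in atTop, ∀ d ≤ N,
          ‖∏ i ∈ Finset.Icc 1 (n + d), u i‖ / ‖∏ i ∈ Finset.Icc 1 (n + d), v i‖ < ε) ∨
      (∀ N : ℕ, ∀ M : ℝ, ∃ᶠ n in atTop, ∀ d ≤ N,
          M < ‖∏ i ∈ Finset.Icc 1 (n + d), u i‖ / ‖∏ i ∈ Finset.Icc 1 (n + d), v i‖))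
    (mu mv : Measure (lp (fun _ : ℕ => 𝕂) p))
    [IsProbabilityMeasure mu] [IsProbabilityMeasure mv]
    (hmu : ∀ A : Set (lp (fun _ : ℕ => 𝕂) p), MeasurableSet A → mu (Bu ⁻¹' A) = mu A)
    (hmv : ∀ A : Set (lp (fun _ : ℕ => 𝕂) p), MeasurableSet A → mv (Bv ⁻¹' A) = mv A)
    (hzero_u : mu {0} = 0) (hzero_v : mv {0} = 0) :
    mu.MutuallySingular mv := by
  have hμ := MeasurePreserving.of_measure_preimage Bu.continuous.measurable hmu
  have hν := MeasurePreserving.of_measure_preimage Bv.continuous.measurable hmv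
  rcases hratio with hsmall | hlarge
  · exact Measure.mutuallySingular_of_forall_exists_measure_lt fun _ hε =>
      exists_measurableSet_measure_lt_measure_compl_lt hu0 hv0 hBu hBv
        (fun N δ hδ => (hsmall N δ hδ).exists) hμ hν hzero_u hε
  · have hsmall : ∀ N : ℕ, ∀ δ : ℝ, 0 < δ → ∃ n, ∀ d ≤ N,
        ‖weightProd v (n + d)‖ / ‖weightProd u (n + d)‖ < δ := by
      intro N δ hδ
      obtain ⟨n, hn⟩ := (hlarge N δ⁻¹).exists
      refine ⟨n, fun d hd => ?_⟩
      rw [← inv_div]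
      exact inv_lt_of_inv_lt₀ hδ (hn d hd)
    exact (Measure.mutuallySingular_of_forall_exists_measure_lt fun _ hε =>
      exists_measurableSet_measure_lt_measure_compl_lt hv0 hu0 hBv hBu hsmall hν hμ hzero_v hε).symm

/-- If for every `N`, `liminf_n max_{0≤d≤N} |u₁⋯u_{n+d}/(v₁⋯v_{n+d})| = 0`, or
for every `N`, `limsup_n min_{0≤d≤N} |u₁⋯u_{n+d}/(v₁⋯v_{n+d})| = ∞`, then `B_u` and `B_v` are
orthogonal: invariant probability measures not charging `{0}` are mutually singular. -/
theorem orthogonal_of_blocks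
    {𝕂 : Type*} [RCLike 𝕂] (p : ℝ≥0∞) [Fact (1 ≤ p)] (hp : p ≠ ⊤)
    (u v : ℕ → 𝕂) (hu0 : ∀ n, 1 ≤ n → u n ≠ 0) (hv0 : ∀ n, 1 ≤ n → v n ≠ 0)
    (hubdd : ∃ M : ℝ, ∀ n, ‖u n‖ ≤ M) (hvbdd : ∃ M : ℝ, ∀ n, ‖v n‖ ≤ M)
    (Bu Bv : lp (fun _ : ℕ => 𝕂) p →L[𝕂] lp (fun _ : ℕ => 𝕂) p)
    (hBu : ∀ (x : lp (fun _ : ℕ => 𝕂) p) (n : ℕ),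
        (Bu x : ∀ _ : ℕ, 𝕂) n = u (n + 1) * (x : ∀ _ : ℕ, 𝕂) (n + 1))
    (hBv : ∀ (x : lp (fun _ : ℕ => 𝕂) p) (n : ℕ),
        (Bv x : ∀ _ : ℕ, 𝕂) n = v (n + 1) * (x : ∀ _ : ℕ, 𝕂) (n + 1))
    (hratio :
      (∀ N : ℕ, ∀ ε : ℝ, 0 < ε → ∃ᶠ n in atTop, ∀ d ≤ N,
          ‖∏ i ∈ Finset.Icc 1 (n + d), u i‖ / ‖∏ i ∈ Finset.Icc 1 (n + d), v i‖ < ε) ∨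
      (∀ N : ℕ, ∀ M : ℝ, ∃ᶠ n in atTop, ∀ d ≤ N,
          M < ‖∏ i ∈ Finset.Icc 1 (n + d), u i‖ / ‖∏ i ∈ Finset.Icc 1 (n + d), v i‖))
    (mu mv : Measure (lp (fun _ : ℕ => 𝕂) p))
    [IsProbabilityMeasure mu] [IsProbabilityMeasure mv]
    (hmu : ∀ A : Set (lp (fun _ : ℕ => 𝕂) p), MeasurableSet A → mu (Bu ⁻¹' A) = mu A)
    (hmv : ∀ A : Set (lp (fun _ : ℕ => 𝕂) p), MeasurableSet A → mv (Bv ⁻¹' A) = mv A)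
    (hzero_u : mu {0} = 0) (hzero_v : mv {0} = 0) :
    mu.MutuallySingular mv :=
  orthogonal_of_blocks_general p u v hu0 hv0 Bu Bv hBu hBv hratio mu mv hmu hmv hzero_u hzero_v
end

section
/- Let 1 ≤ p < ∞ and let B_u, B_v be the weighted backward shifts on ℓ_p(ℤ₊) associated with weight sequences u and v. Assume that ∑_{n=1}^∞ 1/|u₁⋯u_n|^p < ∞ and ∑_{n=1}^∞ 1/|v₁⋯v_n|^p < ∞. Then the following are equivalent: (1) B_u and B_v share a non-zero periodic point; (2) there exist d ∈ ℕ, d ≥ 1, and 0 ≤ j ≤ d−1 such that u_{1+j}⋯u_{dm+j} = v_{1+j}⋯v_{dm+j} for all m ≥ 1; (3) there exist d ∈ ℕ, d ≥ 1, 0 ≤ j ≤ d−1 and a non-zero scalar C such that u₁⋯u_{dm+j} = C · v₁⋯v_{dm+j} for all m ≥ 0 (where an empty product equals 1). -/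
open MeasureTheory Filter
open scoped ENNReal NNReal

/-!
For a weighted backward shift, `(B^k x)_n = (w_{n+1} ⋯ w_{n+k}) x_{n+k}`. If `x` is periodic for
both `B_u` and `B_v` and `x_j ≠ 0`, pick a common period `d > j`; writing `x_j` through
`x_{dm+j}` with both shifts and cancelling `x_{dm+j} ≠ 0` gives equal block products. Conversely,
equal block products make `∑_m e_{dm+j} / (u_{j+1} ⋯ u_{dm+j})` a common periodic point; it lies in
`ℓ_p` because its coordinates are bounded by `|u_1 ⋯ u_j| / |u_1 ⋯ u_n|`. The last condition is
the second one multiplied through by `u_1 ⋯ u_j` and `v_1 ⋯ v_j`.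
-/

open Finset Function

theorem prod_Ioc_ne_zero {M₀ : Type*} [CommMonoidWithZero M₀] [Nontrivial M₀] [NoZeroDivisors M₀]
    {w : ℕ → M₀} (hw : ∀ n, 1 ≤ n → w n ≠ 0) (a b : ℕ) : ∏ i ∈ Ioc a b, w i ≠ 0 :=
  prod_ne_zero_iff.mpr fun i hi => hw i (by grind)

theorem forall_prod_Ioc_eq_iff_exists_const {𝕂 : Type*} [Field 𝕂] {u v : ℕ → 𝕂}
    (hu : ∀ n, 1 ≤ n → u n ≠ 0) (hv : ∀ n, 1 ≤ n → v n ≠ 0) (d j : ℕ) :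
    (∀ m, ∏ i ∈ Ioc j (d * m + j), u i = ∏ i ∈ Ioc j (d * m + j), v i) ↔
      ∃ C : 𝕂, C ≠ 0 ∧ ∀ m, ∏ i ∈ Ioc 0 (d * m + j), u i = C * ∏ i ∈ Ioc 0 (d * m + j), v i := by
  have hsplit (w : ℕ → 𝕂) (m : ℕ) : ∏ i ∈ Ioc 0 (d * m + j), w i =
      (∏ i ∈ Ioc 0 j, w i) * ∏ i ∈ Ioc j (d * m + j), w i :=
    (prod_Ioc_consecutive w (Nat.zero_le j) (Nat.le_add_left j _)).symm
  simp only [hsplit]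
  constructor
  · intro h
    refine ⟨(∏ i ∈ Ioc 0 j, u i) / ∏ i ∈ Ioc 0 j, v i,
      div_ne_zero (prod_Ioc_ne_zero hu 0 j) (prod_Ioc_ne_zero hv 0 j), fun m => ?_⟩
    rw [h m, ← mul_assoc, div_mul_cancel₀ _ (prod_Ioc_ne_zero hv 0 j)]
  · rintro ⟨C, -, hC⟩ m
    have hj := hC 0
    simp only [mul_zero, zero_add, Ioc_self, prod_empty, mul_one] at hj
    apply mul_left_cancel₀ (prod_Ioc_ne_zero hu 0 j)
    rw [hC m, hj, mul_assoc]

section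

variable {𝕂 : Type*} [NormedField 𝕂] {p : ℝ≥0∞}

def IsWeightedBackwardShift (w : ℕ → 𝕂) (B : lp (fun _ : ℕ => 𝕂) p → lp (fun _ : ℕ => 𝕂) p) :
    Prop :=
  ∀ x n, B x n = w (n + 1) * x (n + 1)

namespace IsWeightedBackwardShift

variable {w : ℕ → 𝕂} {B : lp (fun _ : ℕ => 𝕂) p → lp (fun _ : ℕ => 𝕂) p}

theorem iterate_apply (hB : IsWeightedBackwardShift w B) (k : ℕ) (x : lp (fun _ : ℕ => 𝕂) p)
    (n : ℕ) : B^[k] x n = (∏ i ∈ Ioc n (n + k), w i) * x (n + k) := by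
  induction k generalizing x with
  | zero => simp
  | succ k ih =>
    rw [iterate_succ_apply, ih, hB, ← add_assoc, prod_Ioc_succ_top (by omega), mul_assoc]

theorem apply_eq_prod_mul_of_isPeriodicPt (hB : IsWeightedBackwardShift w B) {d : ℕ}
    {x : lp (fun _ : ℕ => 𝕂) p} (hx : IsPeriodicPt B d x) (m n : ℕ) :
    x n = (∏ i ∈ Ioc n (d * m + n), w i) * x (d * m + n) := by
  rw [add_comm, ← hB.iterate_apply, (hx.mul_const m).eq]

theorem isPeriodicPt_of_forall (hB : IsWeightedBackwardShift w B) {d : ℕ}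
    {x : lp (fun _ : ℕ => 𝕂) p} (hx : ∀ n, (∏ i ∈ Ioc n (n + d), w i) * x (n + d) = x n) :
    IsPeriodicPt B d x :=
  lp.ext <| funext fun n => by rw [hB.iterate_apply, hx]

end IsWeightedBackwardShift

-- For `j < d`, the condition `n % d = j` says `n = d * m + j` for some `m`.
def periodicSeq (w : ℕ → 𝕂) (d j n : ℕ) : 𝕂 :=
  if n % d = j then (∏ i ∈ Ioc j n, w i)⁻¹ else 0

theorem periodicSeq_self {w : ℕ → 𝕂} {d j : ℕ} (hj : j < d) : periodicSeq w d j j = 1 := by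
  simp [periodicSeq, Nat.mod_eq_of_lt hj]

theorem prod_mul_periodicSeq_add {w : ℕ → 𝕂} (hw : ∀ n, 1 ≤ n → w n ≠ 0) (d j n : ℕ) :
    (∏ i ∈ Ioc n (n + d), w i) * periodicSeq w d j (n + d) = periodicSeq w d j n := by
  unfold periodicSeq
  rw [Nat.add_mod_right]
  split_ifs with hn
  · have hjn : j ≤ n := hn ▸ Nat.mod_le n d
    rw [← prod_Ioc_consecutive w hjn (Nat.le_add_right n d), mul_inv_rev,
      mul_inv_cancel_left₀ (prod_Ioc_ne_zero hw n (n + d))]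
  · rw [mul_zero]

theorem periodicSeq_congr {u v : ℕ → 𝕂} {d j : ℕ}
    (h : ∀ m, ∏ i ∈ Ioc j (d * m + j), u i = ∏ i ∈ Ioc j (d * m + j), v i) :
    periodicSeq u d j = periodicSeq v d j := by
  funext n
  unfold periodicSeq
  split_ifs with hn
  · have hdiv := Nat.div_add_mod n d
    rw [hn] at hdiv
    rw [← hdiv, h]
  · rfl

theorem memℓp_inv_prod_Ioc_zero {w : ℕ → 𝕂}
    (hsum : Summable fun n => (1 : ℝ) / ‖∏ i ∈ Icc 1 (n + 1), w i‖ ^ p.toReal) :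
    Memℓp (fun n => (∏ i ∈ Ioc 0 n, w i)⁻¹) p := by
  refine memℓp_gen ((summable_nat_add_iff 1).mp ?_)
  simpa only [← Icc_add_one_left_eq_Ioc, zero_add, norm_inv, Real.inv_rpow (norm_nonneg _),
    one_div] using hsum

theorem memℓp_periodicSeq {w : ℕ → 𝕂} (hw : ∀ n, 1 ≤ n → w n ≠ 0)
    (hinv : Memℓp (fun n => (∏ i ∈ Ioc 0 n, w i)⁻¹) p) (d j : ℕ) :
    Memℓp (periodicSeq w d j) p := by
  refine (hinv.const_mul (∏ i ∈ Ioc 0 j, w i)).mono' fun n => ?_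
  unfold periodicSeq
  split_ifs with hn
  · have hjn : j ≤ n := hn ▸ Nat.mod_le n d
    rw [← prod_Ioc_consecutive w (Nat.zero_le j) hjn, mul_inv,
      mul_inv_cancel_left₀ (prod_Ioc_ne_zero hw 0 j)]
  · simp only [norm_zero, norm_nonneg]

variable {u v : ℕ → 𝕂} {Bu Bv : lp (fun _ : ℕ => 𝕂) p → lp (fun _ : ℕ => 𝕂) p}

theorem prod_Ioc_eq_of_isPeriodicPt (hu : IsWeightedBackwardShift u Bu)
    (hv : IsWeightedBackwardShift v Bv) {d : ℕ} {x : lp (fun _ : ℕ => 𝕂) p}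
    (hxu : IsPeriodicPt Bu d x) (hxv : IsPeriodicPt Bv d x) {n : ℕ} (hn : x n ≠ 0) (m : ℕ) :
    ∏ i ∈ Ioc n (d * m + n), u i = ∏ i ∈ Ioc n (d * m + n), v i := by
  have hxu' := hu.apply_eq_prod_mul_of_isPeriodicPt hxu m n
  have hxv' := hv.apply_eq_prod_mul_of_isPeriodicPt hxv m n
  have hx : x (d * m + n) ≠ 0 := fun h => hn (by rw [hxu', h, mul_zero])
  exact mul_right_cancel₀ hx (hxu'.symm.trans hxv')

theorem exists_prod_Ioc_eq_of_isPeriodicPt (hu : IsWeightedBackwardShift u Bu)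
    (hv : IsWeightedBackwardShift v Bv) {x : lp (fun _ : ℕ => 𝕂) p} (hx : x ≠ 0) {du dv : ℕ}
    (hdu : 1 ≤ du) (hdv : 1 ≤ dv) (hxu : IsPeriodicPt Bu du x) (hxv : IsPeriodicPt Bv dv x) :
    ∃ d, 1 ≤ d ∧ ∃ j, j < d ∧
      ∀ m, ∏ i ∈ Ioc j (d * m + j), u i = ∏ i ∈ Ioc j (d * m + j), v i := by
  obtain ⟨n, hn⟩ : ∃ n, x n ≠ 0 := by
    by_contra! h
    exact hx (lp.ext (funext h))
  -- a common period of `x` that exceeds `n`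
  have hnd : n < du * dv * (n + 1) :=
    n.lt_succ_self.trans_le (Nat.le_mul_of_pos_left _ (Nat.mul_pos hdu hdv))
  refine ⟨du * dv * (n + 1), by omega, n, hnd, prod_Ioc_eq_of_isPeriodicPt hu hv ?_ ?_ hn⟩
  · simpa only [mul_assoc] using hxu.mul_const (dv * (n + 1))
  · simpa only [mul_assoc, mul_left_comm du dv] using hxv.mul_const (du * (n + 1))

theorem exists_isPeriodicPt_of_prod_Ioc_eq (hu : IsWeightedBackwardShift u Bu)
    (hv : IsWeightedBackwardShift v Bv) (hu0 : ∀ n, 1 ≤ n → u n ≠ 0)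
    (hv0 : ∀ n, 1 ≤ n → v n ≠ 0) (hinv : Memℓp (fun n => (∏ i ∈ Ioc 0 n, u i)⁻¹) p)
    {d j : ℕ} (hj : j < d)
    (h : ∀ m, ∏ i ∈ Ioc j (d * m + j), u i = ∏ i ∈ Ioc j (d * m + j), v i) :
    ∃ x : lp (fun _ : ℕ => 𝕂) p, x ≠ 0 ∧ IsPeriodicPt Bu d x ∧ IsPeriodicPt Bv d x := by
  let x : lp (fun _ : ℕ => 𝕂) p := ⟨periodicSeq u d j, memℓp_periodicSeq hu0 hinv d j⟩
  have hx : (x : ℕ → 𝕂) = periodicSeq v d j := periodicSeq_congr h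
  refine ⟨x, fun hx0 => ?_, hu.isPeriodicPt_of_forall (prod_mul_periodicSeq_add hu0 d j),
    hv.isPeriodicPt_of_forall ?_⟩
  · have hxj : x j = 0 := by rw [hx0, lp.coeFn_zero, Pi.zero_apply]
    exact one_ne_zero ((periodicSeq_self hj).symm.trans hxj)
  · rw [hx]
    exact prod_mul_periodicSeq_add hv0 d j

end

theorem common_periodic_point_iff_general
    {𝕂 : Type*} [RCLike 𝕂] (p : ℝ≥0∞) [Fact (1 ≤ p)]
    (u v : ℕ → 𝕂) (hu0 : ∀ n, 1 ≤ n → u n ≠ 0) (hv0 : ∀ n, 1 ≤ n → v n ≠ 0)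
    (hsumu : Summable (fun n : ℕ =>
        (1 : ℝ) / ‖∏ i ∈ Finset.Icc 1 (n + 1), u i‖ ^ p.toReal))
    (Bu Bv : lp (fun _ : ℕ => 𝕂) p →L[𝕂] lp (fun _ : ℕ => 𝕂) p)
    (hBu : ∀ (x : lp (fun _ : ℕ => 𝕂) p) (n : ℕ),
        (Bu x : ∀ _ : ℕ, 𝕂) n = u (n + 1) * (x : ∀ _ : ℕ, 𝕂) (n + 1))
    (hBv : ∀ (x : lp (fun _ : ℕ => 𝕂) p) (n : ℕ),
        (Bv x : ∀ _ : ℕ, 𝕂) n = v (n + 1) * (x : ∀ _ : ℕ, 𝕂) (n + 1)) :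
    ((∃ x : lp (fun _ : ℕ => 𝕂) p, x ≠ 0 ∧
        (∃ d : ℕ, 1 ≤ d ∧ (Bu ^ d) x = x) ∧ (∃ d : ℕ, 1 ≤ d ∧ (Bv ^ d) x = x)) ↔
      (∃ d : ℕ, 1 ≤ d ∧ ∃ j : ℕ, j < d ∧ ∀ m : ℕ, 1 ≤ m →
        ∏ i ∈ Finset.Icc (j + 1) (d * m + j), u i =
          ∏ i ∈ Finset.Icc (j + 1) (d * m + j), v i)) ∧
    ((∃ d : ℕ, 1 ≤ d ∧ ∃ j : ℕ, j < d ∧ ∀ m : ℕ, 1 ≤ m →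
        ∏ i ∈ Finset.Icc (j + 1) (d * m + j), u i =
          ∏ i ∈ Finset.Icc (j + 1) (d * m + j), v i) ↔
      (∃ d : ℕ, 1 ≤ d ∧ ∃ j : ℕ, j < d ∧ ∃ C : 𝕂, C ≠ 0 ∧ ∀ m : ℕ,
        ∏ i ∈ Finset.Icc 1 (d * m + j), u i =
          C * ∏ i ∈ Finset.Icc 1 (d * m + j), v i)) := by
  have hfrom_one (d j : ℕ) : (∀ m, 1 ≤ m →
      ∏ i ∈ Ioc j (d * m + j), u i = ∏ i ∈ Ioc j (d * m + j), v i) ↔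
        ∀ m, ∏ i ∈ Ioc j (d * m + j), u i = ∏ i ∈ Ioc j (d * m + j), v i :=
    ⟨fun h m => m.eq_zero_or_pos.elim (fun hm => by simp [hm]) (h m), fun h m _ => h m⟩
  have hIcc (b : ℕ) : Icc 1 b = Ioc 0 b := Icc_add_one_left_eq_Ioc 0 b
  simp only [Icc_add_one_left_eq_Ioc, hIcc, hfrom_one, FunLike.coe_pow_eq_iterate]
  refine ⟨⟨?_, ?_⟩, ?_⟩
  · rintro ⟨x, hx, ⟨du, hdu, hxu⟩, dv, hdv, hxv⟩
    exact exists_prod_Ioc_eq_of_isPeriodicPt hBu hBv hx hdu hdv hxu hxv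
  · rintro ⟨d, hd, j, hj, h⟩
    obtain ⟨x, hx, hxu, hxv⟩ := exists_isPeriodicPt_of_prod_Ioc_eq hBu hBv hu0 hv0
      (memℓp_inv_prod_Ioc_zero hsumu) hj h
    exact ⟨x, hx, ⟨d, hd, hxu⟩, d, hd, hxv⟩
  · simp only [forall_prod_Ioc_eq_iff_exists_const hu0 hv0]

/-- Under the summability conditions, `B_u` and `B_v` share a non-zero periodic
point iff there exist `d ≥ 1` and `0 ≤ j ≤ d-1` with `u_{1+j}⋯u_{dm+j} = v_{1+j}⋯v_{dm+j}` for
all `m ≥ 1`, iff there exist `d ≥ 1`, `0 ≤ j ≤ d-1` and `C ≠ 0` with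
`u₁⋯u_{dm+j} = C·v₁⋯v_{dm+j}` for all `m ≥ 0`. -/
theorem common_periodic_point_iff
    {𝕂 : Type*} [RCLike 𝕂] (p : ℝ≥0∞) [Fact (1 ≤ p)] (hp : p ≠ ⊤)
    (u v : ℕ → 𝕂) (hu0 : ∀ n, 1 ≤ n → u n ≠ 0) (hv0 : ∀ n, 1 ≤ n → v n ≠ 0)
    (hubdd : ∃ M : ℝ, ∀ n, ‖u n‖ ≤ M) (hvbdd : ∃ M : ℝ, ∀ n, ‖v n‖ ≤ M)
    (hsumu : Summable (fun n : ℕ =>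
        (1 : ℝ) / ‖∏ i ∈ Finset.Icc 1 (n + 1), u i‖ ^ p.toReal))
    (hsumv : Summable (fun n : ℕ =>
        (1 : ℝ) / ‖∏ i ∈ Finset.Icc 1 (n + 1), v i‖ ^ p.toReal))
    (Bu Bv : lp (fun _ : ℕ => 𝕂) p →L[𝕂] lp (fun _ : ℕ => 𝕂) p)
    (hBu : ∀ (x : lp (fun _ : ℕ => 𝕂) p) (n : ℕ),
        (Bu x : ∀ _ : ℕ, 𝕂) n = u (n + 1) * (x : ∀ _ : ℕ, 𝕂) (n + 1))
    (hBv : ∀ (x : lp (fun _ : ℕ => 𝕂) p) (n : ℕ),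
        (Bv x : ∀ _ : ℕ, 𝕂) n = v (n + 1) * (x : ∀ _ : ℕ, 𝕂) (n + 1)) :
    ((∃ x : lp (fun _ : ℕ => 𝕂) p, x ≠ 0 ∧
        (∃ d : ℕ, 1 ≤ d ∧ (Bu ^ d) x = x) ∧ (∃ d : ℕ, 1 ≤ d ∧ (Bv ^ d) x = x)) ↔
      (∃ d : ℕ, 1 ≤ d ∧ ∃ j : ℕ, j < d ∧ ∀ m : ℕ, 1 ≤ m →
        ∏ i ∈ Finset.Icc (j + 1) (d * m + j), u i =
          ∏ i ∈ Finset.Icc (j + 1) (d * m + j), v i)) ∧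
    ((∃ d : ℕ, 1 ≤ d ∧ ∃ j : ℕ, j < d ∧ ∀ m : ℕ, 1 ≤ m →
        ∏ i ∈ Finset.Icc (j + 1) (d * m + j), u i =
          ∏ i ∈ Finset.Icc (j + 1) (d * m + j), v i) ↔
      (∃ d : ℕ, 1 ≤ d ∧ ∃ j : ℕ, j < d ∧ ∃ C : 𝕂, C ≠ 0 ∧ ∀ m : ℕ,
        ∏ i ∈ Finset.Icc 1 (d * m + j), u i =
          C * ∏ i ∈ Finset.Icc 1 (d * m + j), v i)) :=
  common_periodic_point_iff_general p u v hu0 hv0 hsumu Bu Bv hBu hBv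
end

section
/- Let 𝕂 = ℝ or ℂ, let Ω = 𝕂^{ℤ₊} with the product topology and product σ-algebra, let μ = ⊗_{n≥0} μ_n be a product probability measure on Ω, and let w = (w_n)_{n≥1} be a sequence of non-zero scalars. Let B_w : Ω → Ω be the weighted backward shift defined by (B_w t)_n = w_{n+1} t_{n+1} for n ≥ 0. Then μ is B_w-invariant if and only if, for each n ≥ 1, the measure μ_n is the image of μ₀ under the map t ↦ t/(w₁⋯w_n), i.e. μ_n(A) = μ₀(w₁⋯w_n · A) for every Borel set A ⊆ 𝕂. -/
/-!
Cylinder sets form a π-system generating the product σ-algebra, so a finite product measure is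
determined by its factors. Pulling a cylinder back along `B t = (gₙ (tₙ₊₁))ₙ` gives a cylinder in
the next coordinates, so `B` maps `⊗ μₙ` to `⊗ gₙ(μₙ₊₁)`; hence `B` preserves `⊗ μₙ` iff
`gₙ(μₙ₊₁) = μₙ` for every `n`, necessity coming from projecting onto the `n`-th coordinate.
For `gₙ = (wₙ₊₁ * ·)` these relations telescope to `(w₁⋯wₙ * ·)(μₙ) = μ₀`.
-/

open MeasureTheory Filter
open scoped ENNReal

/-- `μ` is the product measure on `𝕂^{ℤ₊}` with marginals `μn`: its value on every cylinder set
is the corresponding finite product. -/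
def IsProductMeasure {𝕂 : Type*} [MeasurableSpace 𝕂]
    (μ : Measure (ℕ → 𝕂)) (μn : ℕ → Measure 𝕂) : Prop :=
  ∀ (N : ℕ) (A : ℕ → Set 𝕂), (∀ n, MeasurableSet (A n)) →
    μ {t | ∀ n ≤ N, t n ∈ A n} = ∏ n ∈ Finset.range (N + 1), μn n (A n)

open Set

theorem Finset.coe_pi_eq_setOf_forall_le {X : Type*} (s : Finset ℕ) (t : ℕ → Set X) :
    (s : Set ℕ).pi t = {x | ∀ n ≤ s.sup id, x n ∈ s.piecewise t (fun _ => Set.univ) n} := by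
  ext x
  refine ⟨fun h n _ => ?_, fun h n hn => ?_⟩
  · by_cases hn : n ∈ s
    · rw [Finset.piecewise_eq_of_mem _ _ _ hn]; exact h n hn
    · rw [Finset.piecewise_eq_of_notMem _ _ _ hn]; trivial
  · have := h n (Finset.le_sup (f := id) hn)
    rwa [Finset.piecewise_eq_of_mem _ _ _ hn] at this

theorem MeasurableEquiv.map_eq_iff_forall_image {α β : Type*} [MeasurableSpace α]
    [MeasurableSpace β] (e : α ≃ᵐ β) {μ : Measure α} {ν : Measure β} :
    μ.map e = ν ↔ ∀ s, MeasurableSet s → μ s = ν (e '' s) := by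
  rw [e.map_apply_eq_iff_map_symm_apply_eq, Measure.ext_iff]
  refine forall₂_congr fun s _ => ?_
  rw [e.symm.map_apply, e.image_eq_preimage_symm]

theorem Measurable.map_eq_iff_forall_preimage {α β : Type*} [MeasurableSpace α]
    [MeasurableSpace β] {f : α → β} (hf : Measurable f) {μ : Measure α} {ν : Measure β} :
    μ.map f = ν ↔ ∀ s, MeasurableSet s → μ (f ⁻¹' s) = ν s := by
  rw [Measure.ext_iff]
  exact forall₂_congr fun s hs => by rw [Measure.map_apply hf hs]

theorem prod_Icc_one_ne_zero {M₀ : Type*} [CommMonoidWithZero M₀] [NoZeroDivisors M₀]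
    [Nontrivial M₀] {w : ℕ → M₀} (hw : ∀ n, 1 ≤ n → w n ≠ 0) (n : ℕ) :
    ∏ i ∈ Finset.Icc 1 n, w i ≠ 0 :=
  Finset.prod_ne_zero_iff.2 fun i hi => hw i (Finset.mem_Icc.1 hi).1

section BackwardShift

variable {X : Type*} [MeasurableSpace X]

def backwardShift (g : ℕ → X → X) (t : ℕ → X) : ℕ → X := fun n => g n (t (n + 1))

theorem measurable_backwardShift {g : ℕ → X → X} (hg : ∀ n, Measurable (g n)) :
    Measurable (backwardShift g) :=
  measurable_pi_iff.2 fun n => (hg n).comp (measurable_pi_apply (n + 1))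

theorem measurableSet_setOf_forall_le_mem {N : ℕ} {A : ℕ → Set X}
    (hA : ∀ n, MeasurableSet (A n)) : MeasurableSet {t : ℕ → X | ∀ n ≤ N, t n ∈ A n} :=
  MeasurableSet.pi (to_countable _) fun n _ => hA n

namespace IsProductMeasure

variable {μ ν : Measure (ℕ → X)} {μn : ℕ → Measure X}

theorem unique [IsFiniteMeasure μ] (hμ : IsProductMeasure μ μn) (hν : IsProductMeasure ν μn) :
    μ = ν := by
  have hcyl : ∀ s ∈ squareCylinders fun _ => {A : Set X | MeasurableSet A}, μ s = ν s := by
    rintro _ ⟨s, t, ht, rfl⟩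
    have hA : ∀ n, MeasurableSet (s.piecewise t (fun _ => univ) n) := fun n =>
      s.piecewise_cases t (fun _ => univ) MeasurableSet (ht n (mem_univ n)) MeasurableSet.univ
    rw [Finset.coe_pi_eq_setOf_forall_le, hμ _ _ hA, hν _ _ hA]
  refine ext_of_generate_finite _ generateFrom_squareCylinders.symm
    (isPiSystem_squareCylinders (fun _ => MeasurableSpace.isPiSystem_measurableSet)
      fun _ => MeasurableSet.univ) hcyl (hcyl _ ⟨∅, fun _ => univ, by simp, by simp⟩)

theorem map_eval (hμ : IsProductMeasure μ μn) (hμn : ∀ n, IsProbabilityMeasure (μn n)) (m : ℕ) :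
    μ.map (fun t => t m) = μn m := by
  ext S hS
  have hA : ∀ n, MeasurableSet (Function.update (fun _ => univ) m S n) := by
    intro n; by_cases hn : n = m <;> simp [hn, hS]
  have hpre : (fun t : ℕ → X => t m) ⁻¹' S =
      {t | ∀ n ≤ m, t n ∈ Function.update (fun _ => univ) m S n} := by
    ext t
    refine ⟨fun h n _ => ?_, fun h => by simpa using h m le_rfl⟩
    by_cases hn : n = m
    · subst hn; simpa using h
    · simp [hn]
  rw [Measure.map_apply (measurable_pi_apply m) hS, hpre, hμ m _ hA,
    Finset.prod_eq_single_of_mem m (by simp) fun n _ hn => by simp [hn]]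
  simp

theorem map_backwardShift (hμ : IsProductMeasure μ μn) [IsProbabilityMeasure (μn 0)]
    {g : ℕ → X → X} (hg : ∀ n, Measurable (g n)) :
    IsProductMeasure (μ.map (backwardShift g)) fun n => (μn (n + 1)).map (g n) := by
  intro N A hA
  let A' : ℕ → Set X := fun
    | 0 => univ
    | j + 1 => g j ⁻¹' A j
  have hA' : ∀ n, MeasurableSet (A' n) := fun
    | 0 => MeasurableSet.univ
    | j + 1 => hg j (hA j)
  have hpre : backwardShift g ⁻¹' {t | ∀ n ≤ N, t n ∈ A n} = {t | ∀ n ≤ N + 1, t n ∈ A' n} := by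
    ext t
    refine ⟨fun h n hn => ?_, fun h n hn => h (n + 1) (by omega)⟩
    cases n with
    | zero => trivial
    | succ j => exact h j (by omega)
  rw [Measure.map_apply (measurable_backwardShift hg) (measurableSet_setOf_forall_le_mem hA), hpre,
    hμ _ _ hA', Finset.prod_range_succ']
  simp [A', Measure.map_apply (hg _) (hA _)]

theorem map_backwardShift_eq_self_iff [IsFiniteMeasure μ] (hμ : IsProductMeasure μ μn)
    (hμn : ∀ n, IsProbabilityMeasure (μn n)) {g : ℕ → X → X} (hg : ∀ n, Measurable (g n)) :
    μ.map (backwardShift g) = μ ↔ ∀ m, (μn (m + 1)).map (g m) = μn m := by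
  refine ⟨fun h m => ?_, fun h => ?_⟩
  · calc (μn (m + 1)).map (g m) = μ.map (g m ∘ fun t => t (m + 1)) := by
          rw [← hμ.map_eval hμn, Measure.map_map (hg m) (measurable_pi_apply _)]
      _ = (μ.map (backwardShift g)).map (fun t => t m) :=
          (Measure.map_map (measurable_pi_apply _) (measurable_backwardShift hg)).symm
      _ = μn m := by rw [h, hμ.map_eval hμn]
  · have hshift := hμ.map_backwardShift hg
    rw [funext h] at hshift
    exact (hμ.unique hshift).symm

end IsProductMeasure

end BackwardShift

theorem map_mul_left_succ_eq_iff_map_prod_mul_left_eq {G₀ : Type*} [CommGroupWithZero G₀]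
    [MeasurableSpace G₀] [MeasurableMul G₀] (ν : ℕ → Measure G₀) {w : ℕ → G₀}
    (hw : ∀ n, 1 ≤ n → w n ≠ 0) :
    (∀ m, (ν (m + 1)).map (w (m + 1) * ·) = ν m) ↔
      ∀ n, (ν n).map ((∏ i ∈ Finset.Icc 1 n, w i) * ·) = ν 0 := by
  have hprod (n : ℕ) : ((∏ i ∈ Finset.Icc 1 (n + 1), w i) * ·) =
      ((∏ i ∈ Finset.Icc 1 n, w i) * ·) ∘ (w (n + 1) * ·) := by
    ext x
    rw [Finset.prod_Icc_succ_top (by omega), Function.comp_apply, mul_assoc]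
  refine ⟨fun h n => ?_, fun h m => ?_⟩
  · induction n with
    | zero => simp
    | succ n ih =>
      rw [hprod, ← Measure.map_map (measurable_const_mul _) (measurable_const_mul _), h, ih]
  · apply MeasurableEquiv.map_measurableEquiv_injective
      (MeasurableEquiv.mulLeft₀ _ (prod_Icc_one_ne_zero hw m))
    rw [MeasurableEquiv.coe_mulLeft₀, Measure.map_map (measurable_const_mul _)
      (measurable_const_mul _), ← hprod, h, h]

/-- A product measure `μ = ⊗ μ_n` on `𝕂^{ℤ₊}` is invariant under the weighted
backward shift `B_w` iff for each `n ≥ 1`, `μ_n(A) = μ₀(w₁⋯w_n · A)` for every Borel `A ⊆ 𝕂`. -/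
theorem product_measure_invariant_iff
    {𝕂 : Type*} [RCLike 𝕂] [MeasurableSpace 𝕂] [BorelSpace 𝕂]
    (μ : Measure (ℕ → 𝕂)) [IsProbabilityMeasure μ]
    (μn : ℕ → Measure 𝕂) (hμn : ∀ n, IsProbabilityMeasure (μn n))
    (hμ : IsProductMeasure μ μn)
    (w : ℕ → 𝕂) (hw0 : ∀ n, 1 ≤ n → w n ≠ 0) :
    (∀ B : Set (ℕ → 𝕂), MeasurableSet B →
        μ ((fun t (n : ℕ) => w (n + 1) * t (n + 1)) ⁻¹' B) = μ B) ↔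
      (∀ n : ℕ, 1 ≤ n → ∀ A : Set 𝕂, MeasurableSet A →
        μn n A = μn 0 ((fun t => (∏ i ∈ Finset.Icc 1 n, w i) * t) '' A)) := by
  have hg : ∀ n, Measurable (w (n + 1) * · : 𝕂 → 𝕂) := fun n => measurable_const_mul _
  calc _ ↔ μ.map (backwardShift fun n => (w (n + 1) * ·)) = μ :=
        (measurable_backwardShift hg).map_eq_iff_forall_preimage.symm
    _ ↔ ∀ m, (μn (m + 1)).map (w (m + 1) * ·) = μn m := hμ.map_backwardShift_eq_self_iff hμn hg
    _ ↔ ∀ n, (μn n).map ((∏ i ∈ Finset.Icc 1 n, w i) * ·) = μn 0 :=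
        map_mul_left_succ_eq_iff_map_prod_mul_left_eq μn hw0
    _ ↔ ∀ n, 1 ≤ n → (μn n).map ((∏ i ∈ Finset.Icc 1 n, w i) * ·) = μn 0 :=
        ⟨fun h n _ => h n, fun h n => n.eq_zero_or_pos.elim (fun hn => by simp [hn]) (h n)⟩
    _ ↔ _ := forall₂_congr fun n _ =>
        (MeasurableEquiv.mulLeft₀ _ (prod_Icc_one_ne_zero hw0 n)).map_eq_iff_forall_image
end
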